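/- arXiv:2112.15572 — 2 statements merged into one kernel-verified Lean document; each statement's English description precedes it below -/
import Mathlib

section
/- The partial sums 1_J(z) := 1/2 − (2/π)·Σ_{j=1}^J sin((2j−1)z)/(2j−1) are uniformly bounded on [−π, π]: there exists a constant M (one may take M = 9/2 + 1/π) such that |1_J(z)| ≤ M for all J ∈ ℕ and all z ∈ [−π, π]. -/
/-!
Write `S_J(z) = ∑_{k<J} sin((2k+1)z)/(2k+1)`; by `S_J(-z) = -S_J(z)` and `S_J(π - z) = S_J(z)` it
suffices to bound `S_J` on `[0, π/2]`. For `0 < z ≤ π/2`, split at `m = ⌈1/(2z)⌉`. Each of the first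
`m` terms is at most `z` by `|sin t| ≤ |t|`, so together they contribute at most `1/2 + z`. The
partial sums of `sin((2k+1)z)` equal `(1 - cos(2nz))/(2 sin z) ∈ [0, 1/sin z]`, so Abel summation
against the decreasing weights `1/(2k+1)` bounds the tail by `1/(sin z (2m+1)) ≤ π/2`, using
Jordan's inequality `sin z ≥ 2z/π`. Hence `|S_J(z)| ≤ π + 1/2`.
-/

open Real Finset

theorem norm_sum_range_smul_le_of_antitone {E : Type*} [SeminormedAddCommGroup E]
    [NormedSpace ℝ E] {a : ℕ → E} {b : ℕ → ℝ} {C : ℝ} (hb : Antitone b) (hb0 : ∀ i, 0 ≤ b i)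
    (ha : ∀ n, ‖∑ i ∈ range n, a i‖ ≤ C) (n : ℕ) :
    ‖∑ i ∈ range n, b i • a i‖ ≤ C * b 0 := by
  rw [sum_range_by_parts]
  calc _ ≤ ‖b (n - 1) • ∑ i ∈ range n, a i‖
        + ∑ i ∈ range (n - 1), ‖(b (i + 1) - b i) • ∑ j ∈ range (i + 1), a j‖ :=
        (norm_sub_le _ _).trans (by gcongr; exact norm_sum_le _ _)
    _ ≤ b (n - 1) * C + ∑ i ∈ range (n - 1), (b i - b (i + 1)) * C := by
        gcongr with i
        · rw [norm_smul, Real.norm_of_nonneg (hb0 _)]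
          exact mul_le_mul_of_nonneg_left (ha _) (hb0 _)
        · rw [norm_smul, Real.norm_eq_abs, abs_of_nonpos (sub_nonpos.2 (hb i.le_succ)), neg_sub]
          exact mul_le_mul_of_nonneg_left (ha _) (sub_nonneg.2 (hb i.le_succ))
    _ = C * b 0 := by rw [← sum_mul, sum_range_sub']; ring

theorem two_mul_sin_mul_sum_range_sin_odd_mul (z : ℝ) (n : ℕ) :
    2 * sin z * ∑ k ∈ range n, sin ((2 * k + 1) * z) = 1 - cos (2 * n * z) := by
  have hterm : ∀ k : ℕ, 2 * sin z * sin ((2 * k + 1) * z)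
      = cos (2 * k * z) - cos (2 * (k + 1 : ℕ) * z) := by
    intro k
    rw [cos_sub_cos]
    push_cast
    rw [show (2 * k * z + 2 * (k + 1) * z) / 2 = (2 * k + 1) * z by ring,
      show (2 * k * z - 2 * (k + 1) * z) / 2 = -z by ring, sin_neg]
    ring
  rw [mul_sum, sum_congr rfl fun k _ => hterm k, sum_range_sub']
  simp

theorem sum_range_sin_odd_mul_mem_Icc {z : ℝ} (hz : 0 < sin z) (n : ℕ) :
    ∑ k ∈ range n, sin ((2 * k + 1) * z) ∈ Set.Icc 0 (1 / sin z) := by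
  have h := two_mul_sin_mul_sum_range_sin_odd_mul z n
  have := cos_le_one (2 * n * z)
  have := neg_one_le_cos (2 * n * z)
  constructor
  · nlinarith
  · rw [le_div_iff₀ hz]; nlinarith

theorem abs_sum_range_sin_odd_mul_div_le (z : ℝ) (n : ℕ) :
    |∑ k ∈ range n, sin ((2 * k + 1) * z) / (2 * k + 1)| ≤ n * |z| := by
  calc _ ≤ ∑ k ∈ range n, |sin ((2 * k + 1) * z) / (2 * k + 1)| := abs_sum_le_sum_abs _ _
    _ ≤ ∑ k ∈ range n, |z| := by
        refine sum_le_sum fun k _ => ?_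
        have hk : (0 : ℝ) < 2 * k + 1 := by positivity
        rw [abs_div, abs_of_pos hk, div_le_iff₀ hk]
        calc _ ≤ |(2 * k + 1) * z| := abs_sin_le_abs
          _ = |z| * (2 * k + 1) := by rw [abs_mul, abs_of_pos hk, mul_comm]
    _ = n * |z| := by simp

noncomputable def oddSineSum (J : ℕ) (z : ℝ) : ℝ :=
  ∑ k ∈ range J, sin ((2 * k + 1) * z) / (2 * k + 1)

theorem sum_Icc_eq_oddSineSum (J : ℕ) (z : ℝ) :
    ∑ j ∈ Icc 1 J, sin ((2 * (j : ℝ) - 1) * z) / (2 * (j : ℝ) - 1) = oddSineSum J z := by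
  rw [← Ico_add_one_right_eq_Icc, sum_Ico_eq_sum_range, oddSineSum, Nat.add_sub_cancel]
  refine sum_congr rfl fun k _ => ?_
  push_cast
  ring_nf

theorem oddSineSum_neg (J : ℕ) (z : ℝ) : oddSineSum J (-z) = -oddSineSum J z := by
  simp only [oddSineSum, mul_neg, sin_neg, neg_div, sum_neg_distrib]

theorem oddSineSum_pi_sub (J : ℕ) (z : ℝ) : oddSineSum J (π - z) = oddSineSum J z := by
  refine sum_congr rfl fun k _ => ?_
  have hodd : Odd (2 * k + 1) := odd_two_mul_add_one k
  rw [show (2 * k + 1 : ℝ) * (π - z) = (2 * k + 1 : ℕ) * π - (2 * k + 1) * z by push_cast; ring,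
    sin_nat_mul_pi_sub, hodd.neg_one_pow, neg_one_mul, neg_neg]

theorem abs_oddSineSum_le {z : ℝ} (hz : 0 < sin z) (m J : ℕ) :
    |oddSineSum J z| ≤ m * |z| + 1 / (sin z * (2 * m + 1)) := by
  have hrem : 0 ≤ 1 / (sin z * (2 * m + 1)) := by positivity
  rcases le_or_gt J m with hJm | hmJ
  · calc |oddSineSum J z| ≤ J * |z| := abs_sum_range_sin_odd_mul_div_le z J
      _ ≤ m * |z| := by gcongr
      _ ≤ _ := le_add_of_nonneg_right hrem
  obtain ⟨n, rfl⟩ := exists_add_of_le hmJ.le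
  have htail : |∑ i ∈ range n, sin ((2 * (m + i : ℕ) + 1) * z) / (2 * (m + i : ℕ) + 1)|
      ≤ 1 / (sin z * (2 * m + 1)) := by
    have hpartial : ∀ n', ‖∑ i ∈ range n', sin ((2 * (m + i : ℕ) + 1) * z)‖ ≤ 1 / sin z := by
      intro n'
      have hsplit := sum_range_add (fun k : ℕ => sin ((2 * k + 1) * z)) m n'
      obtain ⟨h0, h1⟩ := sum_range_sin_odd_mul_mem_Icc hz (m + n')
      obtain ⟨h0', h1'⟩ := sum_range_sin_odd_mul_mem_Icc hz m
      rw [Real.norm_eq_abs, eq_sub_of_add_eq' hsplit.symm]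
      exact abs_sub_le_of_nonneg_of_le h0 h1 h0' h1'
    have hanti : Antitone fun i : ℕ => 1 / (2 * (m + i : ℕ) + 1 : ℝ) := by
      intro i j hij
      dsimp only
      gcongr
    have := norm_sum_range_smul_le_of_antitone hanti (fun i => by positivity) hpartial n
    simpa [smul_eq_mul, div_eq_inv_mul, mul_inv, mul_comm] using this
  rw [oddSineSum, sum_range_add]
  exact (abs_add_le _ _).trans (add_le_add (abs_sum_range_sin_odd_mul_div_le z m) htail)

theorem abs_oddSineSum_le_of_mem_Icc_zero_half_pi {z : ℝ} (hz : z ∈ Set.Icc 0 (π / 2)) (J : ℕ) :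
    |oddSineSum J z| ≤ π + 1 / 2 := by
  obtain ⟨hz0, hzπ⟩ := hz
  rcases hz0.eq_or_lt with rfl | hz0
  · simp only [oddSineSum, mul_zero, sin_zero, zero_div, sum_const_zero, abs_zero]
    positivity
  have hjordan : 2 / π * z ≤ sin z := mul_le_sin hz0.le hzπ
  have hsin : 0 < sin z := (by positivity : 0 < 2 / π * z).trans_le hjordan
  set m := ⌈1 / (2 * z)⌉₊
  have hm_lt : (m : ℝ) < 1 / (2 * z) + 1 := Nat.ceil_lt_add_one (by positivity)
  have hm_ge : 1 ≤ 2 * z * m := (div_le_iff₀' (by positivity)).1 (Nat.le_ceil _)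
  have hsmall : m * |z| ≤ 1 / 2 + π / 2 := by
    have : m * z < 1 / 2 + z := by
      calc m * z < (1 / (2 * z) + 1) * z := by gcongr
        _ = 1 / 2 + z := by field_simp
    rw [abs_of_pos hz0]
    linarith
  have hlarge : 1 / (sin z * (2 * m + 1)) ≤ π / 2 := by
    have hz_le : z ≤ π / 2 * sin z := by
      calc z = π / 2 * (2 / π * z) := by field_simp
        _ ≤ π / 2 * sin z := by gcongr
    rw [div_le_iff₀ (by positivity)]
    nlinarith
  linarith [abs_oddSineSum_le hsin m J]

theorem abs_oddSineSum_le_of_abs_le_pi {z : ℝ} (hz : |z| ≤ π) (J : ℕ) :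
    |oddSineSum J z| ≤ π + 1 / 2 := by
  wlog hz0 : 0 ≤ z generalizing z
  · simpa [oddSineSum_neg] using this (z := -z) (by rwa [abs_neg]) (by linarith)
  rw [abs_of_nonneg hz0] at hz
  rcases le_or_gt z (π / 2) with hz2 | hz2
  · exact abs_oddSineSum_le_of_mem_Icc_zero_half_pi ⟨hz0, hz2⟩ J
  · rw [← oddSineSum_pi_sub]
    exact abs_oddSineSum_le_of_mem_Icc_zero_half_pi ⟨by linarith, by linarith⟩ J

/-- Uniform boundedness of the indicator Fourier partial sums on `[−π, π]`,
with the constant `M = 9/2 + 1/π`. -/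
theorem stmt_3 :
    ∃ M : ℝ, M = 9/2 + 1/π ∧
      ∀ (J : ℕ) (z : ℝ), z ∈ Set.Icc (-π) π →
        |1/2 - (2/π) * ∑ j ∈ Finset.Icc 1 J, Real.sin ((2*(j:ℝ)-1)*z) / (2*(j:ℝ)-1)| ≤ M := by
  refine ⟨_, rfl, fun J z hz => ?_⟩
  rw [sum_Icc_eq_oddSineSum]
  have hS := abs_oddSineSum_le_of_abs_le_pi (abs_le.2 hz) J
  have hπ := pi_pos
  calc |1 / 2 - 2 / π * oddSineSum J z| ≤ |1 / 2| + |2 / π * oddSineSum J z| := abs_sub _ _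
    _ = 1 / 2 + 2 / π * |oddSineSum J z| := by
        rw [abs_mul, abs_of_pos (by positivity : (0 : ℝ) < 2 / π), abs_of_pos one_half_pos]
    _ ≤ 1 / 2 + 2 / π * (π + 1 / 2) := by gcongr
    _ ≤ 9 / 2 + 1 / π := by field_simp; linarith
end

section
/- Strong consistency of sample quantiles: let x₁, x₂, … be i.i.d. on (0,1) with law P absolutely continuous with respect to Lebesgue measure and a.e. positive density, let q_p be the unique point with F(q_p) = p for a fixed p ∈ (0,1), and let q̂_p(n) be any p-th sample quantile of the first n observations (i.e., F̂_n(q̂_p(n)⁻) ≤ p ≤ F̂_n(q̂_p(n))). Then q̂_p(n) → q_p almost surely as n → ∞. -/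
/-! By the strong law of large numbers, almost surely the empirical CDF converges to `F` at every
rational point at once. The density is positive on `(0,1)`, so `F` is strictly increasing through
`q`: `F r < p` for `r < q` and `p < F r` for `r > q`. Eventually the empirical CDF at `r` lies on
the same side of `p`, and the sandwich defining `q̂_p(n)` then forces `r < q̂_p(n)`, respectively
`q̂_p(n) ≤ r`. -/

open MeasureTheory ProbabilityTheory Filter Set Topology

noncomputable def empiricalCDF (y : ℕ → ℝ) (n : ℕ) (t : ℝ) : ℝ :=
  (∑ i ∈ Finset.range n, if y i ≤ t then (1 : ℝ) else 0) / n

theorem empiricalCDF_mono (y : ℕ → ℝ) (n : ℕ) : Monotone (empiricalCDF y n) := by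
  intro c t hct
  refine div_le_div_of_nonneg_right (Finset.sum_le_sum fun i _ => ?_) n.cast_nonneg
  split_ifs with hc ht
  exacts [le_rfl, absurd (hc.trans hct) ht, zero_le_one, le_rfl]

theorem empiricalCDF_le_of_lt {y : ℕ → ℝ} {n : ℕ} {c t : ℝ} (hct : c < t) :
    empiricalCDF y n c ≤ (∑ i ∈ Finset.range n, if y i < t then (1 : ℝ) else 0) / n := by
  refine div_le_div_of_nonneg_right (Finset.sum_le_sum fun i _ => ?_) n.cast_nonneg
  split_ifs with hc ht
  exacts [le_rfl, absurd (hc.trans_lt hct) ht, zero_le_one, le_rfl]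

theorem ae_tendsto_empiricalCDF {Ω : Type*} [MeasurableSpace Ω] {P : Measure Ω}
    [IsFiniteMeasure P] {x : ℕ → Ω → ℝ} (hmeas : ∀ i, Measurable (x i))
    (hindep : Pairwise fun i j => IndepFun (x i) (x j) P) {μ : Measure ℝ}
    (hid : ∀ i, P.map (x i) = μ) (c : ℝ) :
    ∀ᵐ ω ∂P,
      Tendsto (fun n => empiricalCDF (x · ω) n c) atTop (𝓝 (μ.real (Iic c))) := by
  set g : ℝ → ℝ := (Iic c).indicator 1
  have hg : Measurable g := measurable_one.indicator measurableSet_Iic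
  have hint : Integrable (g ∘ x 0) P :=
    ((integrable_const (1 : ℝ)).indicator measurableSet_Iic).comp_measurable (hmeas 0)
  have hident (i : ℕ) : IdentDistrib (g ∘ x i) (g ∘ x 0) P P :=
    IdentDistrib.comp ⟨(hmeas i).aemeasurable, (hmeas 0).aemeasurable, by rw [hid i, hid 0]⟩ hg
  have hmean : P[g ∘ x 0] = μ.real (Iic c) := by
    rw [← hid 0, ← integral_indicator_one measurableSet_Iic,
      integral_map (hmeas 0).aemeasurable hg.aestronglyMeasurable]
    rfl
  filter_upwards [strong_law_ae_real (fun i => g ∘ x i) hint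
    (fun i j hij => (hindep hij).comp hg hg) hident] with ω hω
  rw [hmean] at hω
  convert hω using 3 with n
  simp [empiricalCDF, g, Set.indicator_apply]

theorem tendsto_of_empiricalCDF_sandwich {y t : ℕ → ℝ} {F : ℝ → ℝ} {p q : ℝ}
    (hF : ∀ r : ℚ, Tendsto (fun n => empiricalCDF y n r) atTop (𝓝 (F r)))
    (hlt : ∀ c < q, F c < p) (hgt : ∀ c, q < c → p < F c)
    (ht : ∀ᶠ n in atTop,
      (∑ i ∈ Finset.range n, if y i < t n then (1 : ℝ) else 0) / n ≤ p ∧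
        p ≤ empiricalCDF y n (t n)) :
    Tendsto t atTop (𝓝 q) := by
  refine tendsto_order.2 ⟨fun a ha => ?_, fun b hb => ?_⟩
  · obtain ⟨r, har, hrq⟩ := exists_rat_btwn ha
    filter_upwards [(hF r).eventually_lt_const (hlt r hrq), ht] with n hFr htn
    exact har.trans <| lt_of_not_ge fun htr =>
      (htn.2.trans (empiricalCDF_mono y n htr)).not_gt hFr
  · obtain ⟨r, hqr, hrb⟩ := exists_rat_btwn hb
    filter_upwards [(hF r).eventually_const_lt (hgt r hqr), ht] with n hFr htn
    refine lt_of_le_of_lt (le_of_not_gt fun hrt => ?_) hrb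
    exact ((empiricalCDF_le_of_lt hrt).trans htn.1).not_gt hFr

theorem withDensity_apply_ne_zero_of_ae_pos {α : Type*} [MeasurableSpace α] {ν : Measure α}
    {g : α → ENNReal} (hg : AEMeasurable g ν) {s : Set α} (hs : MeasurableSet s)
    (hνs : ν s ≠ 0) (hpos : ∀ᵐ a ∂ν.restrict s, 0 < g a) : ν.withDensity g s ≠ 0 := by
  intro h
  rw [withDensity_apply_eq_zero' hg, ← Measure.restrict_apply' hs] at h
  have hzero : ∀ᵐ a ∂ν.restrict s, g a = 0 := by simpa [ae_iff] using h
  have hfalse : ∀ᵐ _ ∂ν.restrict s, False := by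
    filter_upwards [hzero, hpos] with a h0 h1
    exact h1.ne' h0
  exact hνs (by simpa using ae_iff.1 hfalse)

theorem measureReal_Iic_lt_measureReal_Iic {μ : Measure ℝ} [IsFiniteMeasure μ] {a b : ℝ}
    (h : μ (Ioo a b) ≠ 0) : μ.real (Iic a) < μ.real (Iic b) := by
  have hab : a < b := by
    by_contra! hba
    exact h (by rw [Ioo_eq_empty_of_le hba, measure_empty])
  calc μ.real (Iic a) < μ.real (Iic a) + μ.real (Ioo a b) :=
        lt_add_of_pos_right _ (ENNReal.toReal_pos h (measure_ne_top _ _))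
    _ = μ.real (Iic a ∪ Ioo a b) :=
        (measureReal_union (Iic_disjoint_Ioi le_rfl |>.mono_right Ioo_subset_Ioi_self)
          measurableSet_Ioo).symm
    _ ≤ μ.real (Iic b) := measureReal_mono <|
        union_subset (Iic_subset_Iic.2 hab.le) (Ioo_subset_Iio_self.trans Iio_subset_Iic_self)

theorem withDensity_ofReal_Ioo_ne_zero {f : ℝ → ℝ} (hf : Measurable f) {l u : ℝ}
    (hpos : ∀ᵐ t ∂(volume.restrict (Ioo l u)), 0 < f t) {a b : ℝ}
    (hne : (Ioo a b ∩ Ioo l u).Nonempty) :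
    volume.withDensity (fun t => ENNReal.ofReal (f t)) (Ioo a b) ≠ 0 := by
  refine fun h => withDensity_apply_ne_zero_of_ae_pos hf.ennreal_ofReal.aemeasurable
    (measurableSet_Ioo.inter measurableSet_Ioo)
    ((isOpen_Ioo.inter isOpen_Ioo).measure_ne_zero _ hne) ?_ (measure_mono_null inter_subset_left h)
  filter_upwards [ae_restrict_of_ae_restrict_of_subset inter_subset_right hpos] with t ht
  exact ENNReal.ofReal_pos.2 ht

theorem stmt_15_general {Ω : Type*} [MeasurableSpace Ω] (P : Measure Ω) [IsProbabilityMeasure P]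
    (x : ℕ → Ω → ℝ) (hmeas : ∀ i, Measurable (x i))
    (hindep : iIndepFun x P)
    (μ : Measure ℝ) [IsProbabilityMeasure μ] (hid : ∀ i, Measure.map (x i) P = μ)
    (f : ℝ → ℝ) (hf : Measurable f)
    (hμ : μ = volume.withDensity fun t => ENNReal.ofReal (f t))
    (hpos : ∀ᵐ t ∂(volume.restrict (Set.Ioo (0:ℝ) 1)), 0 < f t)
    (p : ℝ)
    (q : ℝ) (hq : q ∈ Set.Ioo (0:ℝ) 1) (hqF : (μ (Set.Iic q)).toReal = p)
    (qhat : ℕ → Ω → ℝ)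
    (hqhat : ∀ ω, ∀ n : ℕ, 1 ≤ n →
      (∑ i ∈ Finset.range n, if x i ω < qhat n ω then (1:ℝ) else 0) / n ≤ p ∧
      p ≤ (∑ i ∈ Finset.range n, if x i ω ≤ qhat n ω then (1:ℝ) else 0) / n) :
    ∀ᵐ ω ∂P, Tendsto (fun n => qhat n ω) atTop (nhds q) := by
  have hμ_Ioo {a b : ℝ} (hab : a < b) (hb : 0 < b) (ha : a < 1) : μ (Ioo a b) ≠ 0 :=
    hμ ▸ withDensity_ofReal_Ioo_ne_zero hf hpos
      (by rw [Ioo_inter_Ioo, nonempty_Ioo]; exact max_lt (lt_min hab ha) (lt_min hb one_pos))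
  have hslln : ∀ᵐ ω ∂P, ∀ r : ℚ,
      Tendsto (fun n => empiricalCDF (x · ω) n r) atTop (𝓝 (μ.real (Iic r))) :=
    ae_all_iff.2 fun r => ae_tendsto_empiricalCDF hmeas (fun _ _ hij => hindep.indepFun hij) hid r
  filter_upwards [hslln] with ω hω
  refine tendsto_of_empiricalCDF_sandwich (F := fun c => μ.real (Iic c)) hω
    (fun c hc => ?_) (fun c hc => ?_) ((eventually_ge_atTop 1).mono fun n hn => hqhat ω n hn)
  · exact hqF ▸ measureReal_Iic_lt_measureReal_Iic (hμ_Ioo hc hq.1 (hc.trans hq.2))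
  · exact hqF ▸ measureReal_Iic_lt_measureReal_Iic (hμ_Ioo hc (hq.1.trans hc) hq.2)

/-- Strong consistency of sample quantiles: for i.i.d. observations on `(0,1)` with an a.e.
positive Lebesgue density, any sequence of `p`-th sample quantiles (in the empirical CDF
sandwich sense) converges almost surely to the unique population `p`-th quantile `q`. -/
theorem stmt_15 {Ω : Type*} [MeasurableSpace Ω] (P : Measure Ω) [IsProbabilityMeasure P]
    (x : ℕ → Ω → ℝ) (hmeas : ∀ i, Measurable (x i))
    (hindep : iIndepFun x P)
    (μ : Measure ℝ) [IsProbabilityMeasure μ] (hid : ∀ i, Measure.map (x i) P = μ)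
    (f : ℝ → ℝ) (hf : Measurable f) (hfnn : ∀ t, 0 ≤ f t)
    (hμ : μ = volume.withDensity fun t => ENNReal.ofReal (f t))
    (hsupp : μ (Set.Ioo (0:ℝ) 1) = 1)
    (hpos : ∀ᵐ t ∂(volume.restrict (Set.Ioo (0:ℝ) 1)), 0 < f t)
    (p : ℝ) (hp : p ∈ Set.Ioo (0:ℝ) 1)
    (q : ℝ) (hq : q ∈ Set.Ioo (0:ℝ) 1) (hqF : (μ (Set.Iic q)).toReal = p)
    (qhat : ℕ → Ω → ℝ)
    (hqhat : ∀ ω, ∀ n : ℕ, 1 ≤ n →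
      (∑ i ∈ Finset.range n, if x i ω < qhat n ω then (1:ℝ) else 0) / n ≤ p ∧
      p ≤ (∑ i ∈ Finset.range n, if x i ω ≤ qhat n ω then (1:ℝ) else 0) / n) :
    ∀ᵐ ω ∂P, Tendsto (fun n => qhat n ω) atTop (nhds q) :=
  stmt_15_general P x hmeas hindep μ hid f hf hμ hpos p q hq hqF qhat hqhat
end
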